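/- arXiv:2104.01739 — 3 statements merged into one kernel-verified Lean document; each statement's English description precedes it below -/
import Mathlib

section
/- Let n ≥ m ≥ 2 and let G = Γ_{n,m} be the n × m grid graph. Every set S ⊆ V(G) with |∂_G(S)| ≤ m − 1 satisfies |S| ≤ m(m−1)/2 or |S| ≥ mn − (m−2)(m−1)/2. -/
open SimpleGraph


namespace Inspection

variable {V : Type*} {W : Type*}

/-- The boundary of a vertex set `X`: vertices of `X` having a neighbor outside `X`. -/
def boundary (G : SimpleGraph V) (X : Set V) : Set V :=
  {v | v ∈ X ∧ ∃ w, w ∉ X ∧ G.Adj v w}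

/-- The set of neighbors of a vertex set `X`. -/
def nbrSet (G : SimpleGraph V) (X : Set V) : Set V :=
  {v | ∃ u ∈ X, G.Adj u v}

/-- The fully cleared sets of a search `S` (indexed so that turn `t ≥ 1` inspects `S t`):
`FC 0 = ∅`, and `FC (t+1) = PC (t+1) \ ∂(PC (t+1))` where `PC (t+1) = FC t ∪ S (t+1)`. -/
def FC (G : SimpleGraph V) (S : ℕ → Set V) : ℕ → Set V
  | 0 => ∅
  | t + 1 => (FC G S t ∪ S (t + 1)) \ boundary G (FC G S t ∪ S (t + 1))

/-- There is a successful `k`-search on `G`: a finite sequence `S 1, ..., S ℓ` of sets of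
size at most `k` whose final fully cleared set is all of `V`. -/
def SuccessfulSearch (G : SimpleGraph V) (k : ℕ) : Prop :=
  ∃ (ℓ : ℕ) (S : ℕ → Set V),
    (∀ t, 1 ≤ t → t ≤ ℓ → (S t).ncard ≤ k) ∧ FC G S ℓ = Set.univ

/-- The inspection number of `G`: the least `k` admitting a successful `k`-search. -/
noncomputable def inspectionNumber (G : SimpleGraph V) : ℕ :=
  sInf {k | SuccessfulSearch G k}

/-- There is a successful monotonic `k`-search on `G`. -/
def SuccessfulMonotonicSearch (G : SimpleGraph V) (k : ℕ) : Prop :=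
  ∃ (ℓ : ℕ) (S : ℕ → Set V),
    (∀ t, 1 ≤ t → t ≤ ℓ → (S t).ncard ≤ k) ∧
    (∀ i j, i ≤ j → j ≤ ℓ → FC G S i ⊆ FC G S j) ∧
    FC G S ℓ = Set.univ

/-- The monotonic inspection number of `G`. -/
noncomputable def monoInspectionNumber (G : SimpleGraph V) : ℕ :=
  sInf {k | SuccessfulMonotonicSearch G k}

/-- A path decomposition `X 1, ..., X ℓ` of `G`: every edge is contained in some bag, and
for `i ≤ j ≤ k` we have `X i ∩ X k ⊆ X j`. -/
def IsPathDecomp (G : SimpleGraph V) (ℓ : ℕ) (X : ℕ → Set V) : Prop :=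
  (∀ u v : V, G.Adj u v → ∃ i, 1 ≤ i ∧ i ≤ ℓ ∧ u ∈ X i ∧ v ∈ X i) ∧
  (∀ i j k, 1 ≤ i → i ≤ j → j ≤ k → k ≤ ℓ → X i ∩ X k ⊆ X j)

/-- The pathwidth of `G`: the least `w` such that `G` has a path decomposition all of whose
bags have size at most `w + 1`. -/
noncomputable def pathwidth (G : SimpleGraph V) : ℕ :=
  sInf {w | ∃ (ℓ : ℕ) (X : ℕ → Set V), IsPathDecomp G ℓ X ∧
    ∀ i, 1 ≤ i → i ≤ ℓ → (X i).ncard ≤ w + 1}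

/-- Witness data exhibiting `H` as a subdivision of `G`: an injection `f` of the vertices of
`G` into those of `H` and, for each edge of `G`, a path of `H` between the images of its
endpoints, these paths being internally disjoint from each other and from the image of `f`,
and jointly covering all vertices and edges of `H`. -/
structure SubdivisionData (G : SimpleGraph V) (H : SimpleGraph W) where
  f : V → W
  inj : Function.Injective f
  walk : ∀ {u v : V}, G.Adj u v → H.Walk (f u) (f v)
  isPath : ∀ {u v : V} (h : G.Adj u v), (walk h).IsPath
  symm : ∀ {u v : V} (h : G.Adj u v), walk h.symm = (walk h).reverse
  disj : ∀ {u v x y : V} (h₁ : G.Adj u v) (h₂ : G.Adj x y), s(u, v) ≠ s(x, y) →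
      ∀ w : W, w ∈ (walk h₁).support → w ∈ (walk h₂).support → w ∈ Set.range f
  branch : ∀ {u v : V} (h : G.Adj u v) (w : W),
      w ∈ (walk h).support → w ∈ Set.range f → w = f u ∨ w = f v
  cover_vert : ∀ w : W, w ∈ Set.range f ∨ ∃ (u v : V) (h : G.Adj u v), w ∈ (walk h).support
  cover_edge : ∀ e ∈ H.edgeSet, ∃ (u v : V) (h : G.Adj u v), e ∈ (walk h).edges

/-- `H` is a subdivision of `G`. -/
def IsSubdivision (G : SimpleGraph V) (H : SimpleGraph W) : Prop :=
  Nonempty (SubdivisionData G H)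

/-- The topological inspection number of `G`: the least `k` such that every subdivision of
`G` has a further subdivision with inspection number at most `k`. -/
noncomputable def topInspectionNumber (G : SimpleGraph V) : ℕ :=
  sInf {k | ∀ (W' : Type) (H : SimpleGraph W'), IsSubdivision G H →
    ∃ (W'' : Type) (H' : SimpleGraph W''), IsSubdivision H H' ∧ inspectionNumber H' ≤ k}


/-- The `n × m` grid graph: vertices `(i,j)` with `0 ≤ i < n`, `0 ≤ j < m`, and
`(a,b)` adjacent to `(c,d)` iff `|a−c| + |b−d| = 1`. -/
def gridGraph (n m : ℕ) : SimpleGraph (Fin n × Fin m) where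
  Adj a b := |(a.1 : ℤ) - (b.1 : ℤ)| + |(a.2 : ℤ) - (b.2 : ℤ)| = 1
  symm := by
    constructor
    intro a b h
    rw [abs_sub_comm ((b.1 : ℤ)) ((a.1 : ℤ)), abs_sub_comm ((b.2 : ℤ)) ((a.2 : ℤ))]
    exact h
  loopless := by constructor; intro a h; simp at h


/-!
Count `S`, `Sᶜ` and `∂S` column by column. A column meeting both `S` and `Sᶜ` contains a
boundary vertex, and a column inside `S` together with a column disjoint from `S` puts a boundary
vertex in every row. Since `|∂S| < m ≤ n`, some column `a` contains no boundary vertex, so it is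
disjoint from `S` or contained in it.

If it is disjoint from `S`, walk away from `a` in both directions: a column has at most as many
vertices of `S` as the previous one plus its own boundary vertices, and every column meeting `S`
has a boundary vertex. So the nonzero column counts are bounded by distinct partial sums of the
boundary counts, and `|S| ≤ 1 + ⋯ + |∂S| ≤ m(m-1)/2`. If it is contained in `S`, the same walk
bounds the columns of `Sᶜ`, but now the growth of a column is paid for by the boundary vertices
of the previous one. Both walks charge column `a`, which is free, and the boundary vertices of
the last column meeting `Sᶜ` are never spent, which gives `|Sᶜ| ≤ 1 + ⋯ + (|∂S| - 1)`.
-/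

open Finset

theorem le_add_sum_range_of_succ_le (c w : ℕ → ℕ) {N : ℕ}
    (hstep : ∀ k < N, c (k + 1) ≤ c k + w k) : c N ≤ c 0 + ∑ k ∈ range N, w k := by
  induction N with
  | zero => simp
  | succ N ih =>
    have := ih fun k hk => hstep k (by omega)
    have := hstep N (by omega)
    rw [sum_range_succ]
    omega

theorem two_mul_sum_range_succ_le_of_step (c w : ℕ → ℕ) {N : ℕ} (h0 : c 0 = 0)
    (hstep : ∀ k < N, c (k + 1) ≤ c k + w k) (hpos : ∀ k < N, 0 < c (k + 1) → 0 < w k) :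
    2 * ∑ k ∈ range (N + 1), c k ≤
      (∑ k ∈ range N, w k) * (∑ k ∈ range N, w k + 1) := by
  induction N with
  | zero => simp [h0]
  | succ N ih =>
    have ih := ih (fun k hk => hstep k (by omega)) (fun k hk => hpos k (by omega))
    rw [sum_range_succ c (N + 1), sum_range_succ w]
    set W := ∑ k ∈ range N, w k
    rcases Nat.eq_zero_or_pos (c (N + 1)) with hc | hc
    · rw [hc]
      nlinarith
    · have hw := hpos N (by omega) hc
      have hcN : c N ≤ W := by
        simpa [h0] using le_add_sum_range_of_succ_le c w fun k hk => hstep k (by omega)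
      have := hstep N (by omega)
      nlinarith

theorem two_mul_sum_range_le_of_step (c w : ℕ → ℕ) {N : ℕ} (h0 : c 0 = 0)
    (hstep : ∀ k, k + 1 < N → c (k + 1) ≤ c k + w k) (hpos : ∀ k < N, 0 < c k → 0 < w k) :
    2 * ∑ k ∈ range N, c k ≤ (∑ k ∈ range N, w k - 1) * ∑ k ∈ range N, w k := by
  induction N with
  | zero => simp
  | succ N ih =>
    rw [sum_range_succ c, sum_range_succ w]
    rcases Nat.eq_zero_or_pos (c N) with hc | hc
    · have ih := ih (fun k hk => hstep k (by omega)) (fun k hk => hpos k (by omega))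
      rw [hc, add_zero]
      exact ih.trans (Nat.mul_le_mul (by omega) (by omega))
    · have hpos_succ (k : ℕ) (hk : k < N) (hck : 0 < c (k + 1)) : 0 < w k := by
        have := hstep k (by omega)
        rcases Nat.eq_zero_or_pos (c k) with h | h
        · omega
        · exact hpos k (by omega) h
      have key := two_mul_sum_range_succ_le_of_step c w h0 (fun k hk => hstep k (by omega))
        hpos_succ
      rw [sum_range_succ] at key
      have := hpos N (by omega) hc
      exact key.trans (Nat.mul_le_mul (by omega) (by omega))

theorem sum_range_split_at (f : ℕ → ℕ) {a n : ℕ} (ha : a < n) :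
    ∑ i ∈ range n, f i + f a =
      ∑ k ∈ range (a + 1), f (a - k) + ∑ k ∈ range (n - a), f (a + k) := by
  have hL : ∑ k ∈ range (a + 1), f (a - k) = ∑ i ∈ range a, f i + f a := by
    have := sum_range_reflect f (a + 1)
    rw [add_tsub_cancel_right] at this
    rw [this, sum_range_succ]
  obtain ⟨d, rfl⟩ := Nat.exists_eq_add_of_lt ha
  rw [hL, show a + d + 1 - a = d + 1 by omega, Nat.add_assoc a d 1, sum_range_add]
  ring

theorem two_mul_sum_range_le_of_le_add_dest (c w : ℕ → ℕ) {a n : ℕ} (ha : a < n)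
    (hca : c a = 0)
    (hadj : ∀ i, i + 1 < n → c (i + 1) ≤ c i + w (i + 1) ∧ c i ≤ c (i + 1) + w i)
    (hpos : ∀ i < n, 0 < c i → 0 < w i) :
    2 * ∑ i ∈ range n, c i ≤ (∑ i ∈ range n, w i) * (∑ i ∈ range n, w i + 1) := by
  have hR := two_mul_sum_range_succ_le_of_step (N := n - a - 1) (fun k => c (a + k))
    (fun k => w (a + k + 1)) (by simpa) (fun k hk => (hadj (a + k) (by omega)).1)
    fun k hk h => hpos _ (by omega) h
  have hL := two_mul_sum_range_succ_le_of_step (N := a) (fun k => c (a - k))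
    (fun k => w (a - (k + 1))) (by simpa)
    (fun k hk => by
      have := (hadj (a - (k + 1)) (by omega)).2
      rwa [show a - (k + 1) + 1 = a - k by omega] at this)
    fun k hk h => hpos _ (by omega) h
  have hn : n - a = n - a - 1 + 1 := by omega
  have hc := sum_range_split_at c ha
  have hw := sum_range_split_at w ha
  rw [hn, hca] at hc
  rw [hn, sum_range_succ' _ (n - a - 1), sum_range_succ' _ a] at hw
  simp only [Nat.sub_zero, add_zero, ← add_assoc] at hw hR hL
  set WL := ∑ k ∈ range a, w (a - (k + 1))
  set WR := ∑ k ∈ range (n - a - 1), w (a + k + 1)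
  have hW : WL + WR ≤ ∑ i ∈ range n, w i := by omega
  calc 2 * ∑ i ∈ range n, c i ≤ WL * (WL + 1) + WR * (WR + 1) := by omega
    _ ≤ (WL + WR) * (WL + WR + 1) := by nlinarith
    _ ≤ _ := Nat.mul_le_mul hW (by omega)

theorem pred_mul_add_pred_mul_le (a b : ℕ) :
    (a - 1) * a + (b - 1) * b ≤ (a + b - 1) * (a + b) := by
  rcases a with _ | a
  · simp
  rcases b with _ | b
  · simp
  rw [show a + 1 + (b + 1) - 1 = a + b + 1 by omega]
  simp only [Nat.add_sub_cancel]
  nlinarith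

theorem two_mul_sum_range_le_of_le_add_src (c w : ℕ → ℕ) {a n : ℕ} (ha : a < n)
    (hca : c a = 0) (hwa : w a = 0)
    (hadj : ∀ i, i + 1 < n → c (i + 1) ≤ c i + w i ∧ c i ≤ c (i + 1) + w (i + 1))
    (hpos : ∀ i < n, 0 < c i → 0 < w i) :
    2 * ∑ i ∈ range n, c i ≤ (∑ i ∈ range n, w i - 1) * ∑ i ∈ range n, w i := by
  have hR := two_mul_sum_range_le_of_step (N := n - a) (fun k => c (a + k)) (fun k => w (a + k))
    (by simpa) (fun k hk => (hadj (a + k) (by omega)).1) fun k hk h => hpos _ (by omega) h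
  have hL := two_mul_sum_range_le_of_step (N := a + 1) (fun k => c (a - k)) (fun k => w (a - k))
    (by simpa)
    (fun k hk => by
      have := (hadj (a - (k + 1)) (by omega)).2
      rwa [show a - (k + 1) + 1 = a - k by omega] at this)
    fun k hk h => hpos _ (by omega) h
  have hc := sum_range_split_at c ha
  have hw := sum_range_split_at w ha
  rw [hca] at hc
  rw [hwa] at hw
  set WL := ∑ k ∈ range (a + 1), w (a - k)
  set WR := ∑ k ∈ range (n - a), w (a + k)
  have hW : WL + WR = ∑ i ∈ range n, w i := by omega
  rw [← hW]
  calc 2 * ∑ i ∈ range n, c i ≤ (WL - 1) * WL + (WR - 1) * WR := by omega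
    _ ≤ (WL + WR - 1) * (WL + WR) := pred_mul_add_pred_mul_le WL WR

theorem exists_map_mem_boundary {G : SimpleGraph V} {H : SimpleGraph W} (f : H →g G)
    (hH : H.Preconnected) {S : Set V} {u v : W} (hu : f u ∈ S) (hv : f v ∉ S) :
    ∃ x, f x ∈ boundary G S := by
  obtain ⟨p⟩ := hH u v
  obtain ⟨d, -, hd, hd'⟩ := p.exists_boundary_dart (f ⁻¹' S) hu hv
  exact ⟨d.fst, hd, f d.snd, hd', f.map_adj d.adj⟩

section BoxProd

variable {α β : Type*} {G : SimpleGraph α} {H : SimpleGraph β} {S : Set (α × β)} {a a' : α}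

theorem ncard_preimage_mk_le [Finite β] (hadj : G.Adj a a') :
    (Prod.mk a' ⁻¹' S).ncard ≤
      (Prod.mk a ⁻¹' S).ncard + (Prod.mk a' ⁻¹' boundary (G □ H) S).ncard := by
  refine (Set.ncard_le_ncard fun b hb => ?_).trans (Set.ncard_union_le _ _)
  by_cases h : (a, b) ∈ S
  · exact Or.inl h
  · exact Or.inr ⟨hb, (a, b), h, boxProd_adj_left.2 hadj.symm⟩

theorem ncard_preimage_mk_compl_le [Finite β] (hadj : G.Adj a a') :
    (Prod.mk a' ⁻¹' Sᶜ).ncard ≤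
      (Prod.mk a ⁻¹' Sᶜ).ncard + (Prod.mk a ⁻¹' boundary (G □ H) S).ncard := by
  refine (Set.ncard_le_ncard fun b hb => ?_).trans (Set.ncard_union_le _ _)
  by_cases h : (a, b) ∈ S
  · exact Or.inr ⟨h, (a', b), hb, boxProd_adj_left.2 hadj⟩
  · exact Or.inl h

theorem ncard_preimage_mk_boundary_pos [Finite β] (hH : H.Preconnected)
    (hS : 0 < (Prod.mk a ⁻¹' S).ncard) (hSc : 0 < (Prod.mk a ⁻¹' Sᶜ).ncard) :
    0 < (Prod.mk a ⁻¹' boundary (G □ H) S).ncard := by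
  obtain ⟨b, hb⟩ := (Set.ncard_pos).1 hS
  obtain ⟨b', hb'⟩ := (Set.ncard_pos).1 hSc
  obtain ⟨x, hx⟩ := exists_map_mem_boundary (G.boxProdRight H a).toHom hH hb hb'
  exact (Set.ncard_pos).2 ⟨x, hx⟩

theorem card_le_ncard_boundary [Finite α] [Finite β] (hG : G.Preconnected)
    (ha : ∀ b, (a, b) ∈ S) (ha' : ∀ b, (a', b) ∉ S) :
    Nat.card β ≤ (boundary (G □ H) S).ncard := by
  have (b : β) : ∃ x, (x, b) ∈ boundary (G □ H) S :=
    exists_map_mem_boundary (G.boxProdLeft H b).toHom hG (ha b) (ha' b)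
  choose f hf using this
  rw [← Set.ncard_range_of_injective (f := fun b => (f b, b)) fun b b' h => congr_arg Prod.snd h]
  exact Set.ncard_le_ncard (Set.range_subset_iff.2 hf)

theorem ncard_eq_sum_ncard_preimage_mk [Fintype α] [Fintype β] (A : Set (α × β)) :
    A.ncard = ∑ a, (Prod.mk a ⁻¹' A).ncard := by
  classical
  simp only [Set.ncard_eq_toFinset_card', Set.toFinset_card, Fintype.card_subtype,
    Finset.card_filter, Fintype.sum_prod_type, Set.mem_preimage]

end BoxProd

theorem gridGraph_eq_boxProd (n m : ℕ) : gridGraph n m = pathGraph n □ pathGraph m := by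
  ext x y
  simp only [gridGraph, boxProd_adj, pathGraph_adj, Fin.ext_iff]
  rcases abs_cases ((x.1 : ℤ) - y.1) with ⟨h1, _⟩ | ⟨h1, _⟩ <;>
  rcases abs_cases ((x.2 : ℤ) - y.2) with ⟨h2, _⟩ | ⟨h2, _⟩ <;> rw [h1, h2] <;> omega

section Columns

variable {n m : ℕ}

noncomputable def colCard (A : Set (Fin n × Fin m)) (i : ℕ) : ℕ :=
  if h : i < n then (Prod.mk (⟨i, h⟩ : Fin n) ⁻¹' A).ncard else 0

theorem colCard_of_lt (A : Set (Fin n × Fin m)) {i : ℕ} (h : i < n) :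
    colCard A i = (Prod.mk (⟨i, h⟩ : Fin n) ⁻¹' A).ncard :=
  dif_pos h

theorem sum_range_colCard (A : Set (Fin n × Fin m)) :
    ∑ i ∈ range n, colCard A i = A.ncard := by
  rw [← Fin.sum_univ_eq_sum_range, ncard_eq_sum_ncard_preimage_mk]
  exact sum_congr rfl fun i _ => colCard_of_lt A i.isLt

theorem exists_colCard_eq_zero (A : Set (Fin n × Fin m)) (hA : A.ncard < n) :
    ∃ a < n, colCard A a = 0 := by
  by_contra! h
  have := card_nsmul_le_sum (range n) (colCard A) 1 fun i hi =>
    Nat.one_le_iff_ne_zero.2 (h i (mem_range.1 hi))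
  rw [sum_range_colCard, card_range, smul_eq_mul, mul_one] at this
  omega

variable (S : Set (Fin n × Fin m))

theorem colCard_le_add {i : ℕ} (h : i + 1 < n) :
    colCard S (i + 1) ≤ colCard S i + colCard (boundary (gridGraph n m) S) (i + 1) ∧
      colCard S i ≤ colCard S (i + 1) + colCard (boundary (gridGraph n m) S) i := by
  have hadj : (pathGraph n).Adj ⟨i, by omega⟩ ⟨i + 1, h⟩ := pathGraph_adj.2 (Or.inl rfl)
  simp only [colCard_of_lt _ h, colCard_of_lt _ (show i < n by omega), gridGraph_eq_boxProd]
  exact ⟨ncard_preimage_mk_le hadj, ncard_preimage_mk_le hadj.symm⟩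

theorem colCard_compl_le_add {i : ℕ} (h : i + 1 < n) :
    colCard Sᶜ (i + 1) ≤ colCard Sᶜ i + colCard (boundary (gridGraph n m) S) i ∧
      colCard Sᶜ i ≤ colCard Sᶜ (i + 1) + colCard (boundary (gridGraph n m) S) (i + 1) := by
  have hadj : (pathGraph n).Adj ⟨i, by omega⟩ ⟨i + 1, h⟩ := pathGraph_adj.2 (Or.inl rfl)
  simp only [colCard_of_lt _ h, colCard_of_lt _ (show i < n by omega), gridGraph_eq_boxProd]
  exact ⟨ncard_preimage_mk_compl_le hadj, ncard_preimage_mk_compl_le hadj.symm⟩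

theorem colCard_boundary_pos {i : ℕ} (hi : i < n) (hS : 0 < colCard S i)
    (hSc : 0 < colCard Sᶜ i) : 0 < colCard (boundary (gridGraph n m) S) i := by
  rw [colCard_of_lt _ hi] at hS hSc ⊢
  rw [gridGraph_eq_boxProd]
  exact ncard_preimage_mk_boundary_pos (pathGraph_preconnected m) hS hSc

theorem colCard_eq_zero_or_compl_eq_zero {i : ℕ} (hi : i < n)
    (hB : colCard (boundary (gridGraph n m) S) i = 0) : colCard S i = 0 ∨ colCard Sᶜ i = 0 := by
  by_contra! h
  exact (colCard_boundary_pos S hi (Nat.pos_of_ne_zero h.1) (Nat.pos_of_ne_zero h.2)).ne' hB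

theorem le_ncard_boundary_of_colCard {a a' : ℕ} (ha : a < n) (ha' : a' < n)
    (hfull : colCard Sᶜ a = 0) (hempty : colCard S a' = 0) :
    m ≤ (boundary (gridGraph n m) S).ncard := by
  rw [colCard_of_lt _ ha, Set.ncard_eq_zero] at hfull
  rw [colCard_of_lt _ ha', Set.ncard_eq_zero] at hempty
  rw [gridGraph_eq_boxProd]
  simpa using card_le_ncard_boundary (H := pathGraph m) (pathGraph_preconnected n)
    (fun b => by simpa using Set.ext_iff.1 hfull b)
    (fun b => by simpa using Set.ext_iff.1 hempty b)

theorem two_mul_ncard_le_of_colCard_eq_zero {a : ℕ} (ha : a < n) (hSa : colCard S a = 0)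
    (hB : (boundary (gridGraph n m) S).ncard < m) :
    2 * S.ncard ≤
      (boundary (gridGraph n m) S).ncard * ((boundary (gridGraph n m) S).ncard + 1) := by
  have hSc (i : ℕ) (hi : i < n) : 0 < colCard Sᶜ i := Nat.pos_of_ne_zero fun h => by
    have := le_ncard_boundary_of_colCard S hi ha h hSa
    omega
  have key := two_mul_sum_range_le_of_le_add_dest (colCard S) _ ha hSa
    (fun i => colCard_le_add S) fun i hi hS => colCard_boundary_pos S hi hS (hSc i hi)
  rwa [sum_range_colCard, sum_range_colCard] at key

theorem two_mul_ncard_compl_le_of_colCard_eq_zero {a : ℕ} (ha : a < n)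
    (hSca : colCard Sᶜ a = 0) (hBa : colCard (boundary (gridGraph n m) S) a = 0)
    (hB : (boundary (gridGraph n m) S).ncard < m) :
    2 * Sᶜ.ncard ≤
      ((boundary (gridGraph n m) S).ncard - 1) * (boundary (gridGraph n m) S).ncard := by
  have hS (i : ℕ) (hi : i < n) : 0 < colCard S i := Nat.pos_of_ne_zero fun h => by
    have := le_ncard_boundary_of_colCard S ha hi hSca h
    omega
  have key := two_mul_sum_range_le_of_le_add_src (colCard Sᶜ) _ ha hSca hBa
    (fun i => colCard_compl_le_add S) fun i hi hSc => colCard_boundary_pos S hi (hS i hi) hSc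
  rwa [sum_range_colCard, sum_range_colCard] at key

end Columns

/-- For `n ≥ m ≥ 2`, every set `S` of vertices of the `n × m` grid graph with
`|∂(S)| ≤ m − 1` satisfies `|S| ≤ m(m−1)/2` or `|S| ≥ mn − (m−2)(m−1)/2`. -/
theorem gridGraph_small_boundary (n m : ℕ) (hm : 2 ≤ m) (hnm : m ≤ n)
    (S : Set (Fin n × Fin m)) (hb : (boundary (gridGraph n m) S).ncard ≤ m - 1) :
    S.ncard ≤ m * (m - 1) / 2 ∨ m * n - (m - 2) * (m - 1) / 2 ≤ S.ncard := by
  set B := boundary (gridGraph n m) S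
  obtain ⟨a, ha, hBa⟩ := exists_colCard_eq_zero B (by omega)
  rcases colCard_eq_zero_or_compl_eq_zero S ha hBa with hSa | hSca
  · left
    have key : 2 * S.ncard ≤ B.ncard * (B.ncard + 1) :=
      two_mul_ncard_le_of_colCard_eq_zero S ha hSa (hb.trans_lt (by omega))
    rw [Nat.le_div_iff_mul_le two_pos]
    calc S.ncard * 2 ≤ B.ncard * (B.ncard + 1) := by omega
      _ ≤ (m - 1) * m := Nat.mul_le_mul hb (by omega)
      _ = m * (m - 1) := Nat.mul_comm _ _
  · right
    have key : 2 * Sᶜ.ncard ≤ (B.ncard - 1) * B.ncard :=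
      two_mul_ncard_compl_le_of_colCard_eq_zero S ha hSca hBa (hb.trans_lt (by omega))
    have hSc : Sᶜ.ncard ≤ (m - 2) * (m - 1) / 2 := by
      rw [Nat.le_div_iff_mul_le two_pos]
      calc Sᶜ.ncard * 2 ≤ (B.ncard - 1) * B.ncard := by omega
        _ ≤ (m - 2) * (m - 1) := Nat.mul_le_mul (by omega) hb
    have hcard : S.ncard + Sᶜ.ncard = m * n := by
      rw [Set.ncard_add_ncard_compl]
      simp [Nat.mul_comm]
    omega

end Inspection
end

section
/- For every connected finite simple graph G, in(G) ≤ pw(G) + 1, where pw(G) denotes the pathwidth of G. -/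
open SimpleGraph


namespace Inspection

variable {V : Type*} {W : Type*}

section

variable {V : Type*} {G : SimpleGraph V} {ℓ k : ℕ} {X : ℕ → Set V}

/-- Searching with the bags of a path decomposition clears a vertex once its last bag has been
inspected: an edge `uv` to a still contaminated `u` would lie in an earlier bag, and `u` would
reappear later, so by interpolation `u` lies in the current bag after all. -/
theorem IsPathDecomp.mem_FC (hX : IsPathDecomp G ℓ X) {t : ℕ} {v : V}
    (hfirst : ∃ i, 1 ≤ i ∧ i ≤ t ∧ v ∈ X i) (hlast : ∀ j, t < j → j ≤ ℓ → v ∉ X j) :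
    v ∈ FC G X t := by
  induction t generalizing v with
  | zero => obtain ⟨i, hi1, hit, -⟩ := hfirst; omega
  | succ t ih =>
    obtain ⟨i, hi1, hit, hvi⟩ := hfirst
    have hvPC : v ∈ FC G X t ∪ X (t + 1) := by
      by_cases hv : v ∈ X (t + 1)
      · exact Or.inr hv
      have hi : i ≠ t + 1 := fun h => hv (h ▸ hvi)
      refine Or.inl (ih ⟨i, hi1, by omega, hvi⟩ fun j htj hjℓ hvj => ?_)
      by_cases hj : j = t + 1
      · exact hv (hj ▸ hvj)
      · exact hlast j (by omega) hjℓ hvj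
    refine ⟨hvPC, ?_⟩
    rintro ⟨-, u, huPC, hvu⟩
    have hu : u ∉ X (t + 1) := fun h => huPC (Or.inr h)
    obtain ⟨m, hm1, hmℓ, hvm, hum⟩ := hX.1 v u hvu
    have hmt : m ≤ t := by
      by_contra! hm
      have hm' : m ≠ t + 1 := fun h => hu (h ▸ hum)
      exact hlast m (by omega) hmℓ hvm
    obtain ⟨j, htj, hjℓ, huj⟩ : ∃ j, t < j ∧ j ≤ ℓ ∧ u ∈ X j := by
      by_contra! h
      exact huPC (Or.inl (ih ⟨m, hm1, hmt, hum⟩ h))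
    exact hu (hX.2 m (t + 1) j hm1 (by omega) htj hjℓ ⟨hum, huj⟩)

theorem IsPathDecomp.successfulSearch (hX : IsPathDecomp G ℓ X)
    (hcover : ∀ v, ∃ i, 1 ≤ i ∧ i ≤ ℓ ∧ v ∈ X i)
    (hsize : ∀ i, 1 ≤ i → i ≤ ℓ → (X i).ncard ≤ k) : SuccessfulSearch G k :=
  ⟨ℓ, X, hsize, Set.eq_univ_of_forall fun v =>
    hX.mem_FC (hcover v) fun _ hℓj hjℓ => absurd hjℓ (Nat.not_le_of_lt hℓj)⟩

theorem isPathDecomp_univ : IsPathDecomp G 1 fun _ => Set.univ :=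
  ⟨fun _ _ _ => ⟨1, le_rfl, le_rfl, trivial, trivial⟩, fun _ _ _ _ _ _ _ _ _ => trivial⟩

theorem exists_pathDecomp_ncard_le_pathwidth_add_one (G : SimpleGraph V) :
    ∃ ℓ X, IsPathDecomp G ℓ X ∧ ∀ i, 1 ≤ i → i ≤ ℓ → (X i).ncard ≤ pathwidth G + 1 :=
  Nat.sInf_mem (s := {w | ∃ ℓ X, IsPathDecomp G ℓ X ∧ ∀ i, 1 ≤ i → i ≤ ℓ → (X i).ncard ≤ w + 1})
    ⟨Nat.card V, 1, _, isPathDecomp_univ, fun _ _ _ => (Set.ncard_univ V).trans_le (Nat.le_succ _)⟩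

theorem exists_covering_pathDecomp_of_preconnected (hG : G.Preconnected)
    (hX : IsPathDecomp G ℓ X) (hsize : ∀ i, 1 ≤ i → i ≤ ℓ → (X i).ncard ≤ k) (hk : 1 ≤ k) :
    ∃ ℓ' X', IsPathDecomp G ℓ' X' ∧ (∀ v, ∃ i, 1 ≤ i ∧ i ≤ ℓ' ∧ v ∈ X' i) ∧
      ∀ i, 1 ≤ i → i ≤ ℓ' → (X' i).ncard ≤ k := by
  rcases subsingleton_or_nontrivial V with hV | hV
  · exact ⟨1, fun _ => Set.univ, isPathDecomp_univ, fun _ => ⟨1, le_rfl, le_rfl, trivial⟩,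
      fun _ _ _ => (Set.ncard_le_one_of_subsingleton _).trans hk⟩
  · refine ⟨ℓ, X, hX, fun v => ?_, hsize⟩
    obtain ⟨u, hvu⟩ := hG.exists_adj_of_nontrivial v
    obtain ⟨i, hi1, hiℓ, hvi, -⟩ := hX.1 v u hvu
    exact ⟨i, hi1, hiℓ, hvi⟩

end

theorem inspectionNumber_le_pathwidth_general {V : Type} (G : SimpleGraph V)
    (hG : G.Connected) :
    inspectionNumber G ≤ pathwidth G + 1 := by
  obtain ⟨ℓ, X, hX, hsize⟩ := exists_pathDecomp_ncard_le_pathwidth_add_one G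
  obtain ⟨ℓ', X', hX', hcover, hsize'⟩ :=
    exists_covering_pathDecomp_of_preconnected hG.preconnected hX hsize (Nat.le_add_left 1 _)
  exact Nat.sInf_le (hX'.successfulSearch hcover hsize')

/-- For every connected finite simple graph `G`, `in(G) ≤ pw(G) + 1`. -/
theorem inspectionNumber_le_pathwidth {V : Type} [Fintype V] (G : SimpleGraph V)
    (hG : G.Connected) :
    inspectionNumber G ≤ pathwidth G + 1 :=
  inspectionNumber_le_pathwidth_general G hG

end Inspection
end

section
/- If G is a connected finite simple graph with in_t(G) ≤ 2, then G is a path, i.e., G is acyclic and has maximum degree at most 2. -/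
open SimpleGraph


namespace Inspection

variable {V : Type*} {W : Type*}

/-!
Both conclusions come from obstructions to searching with two searchers, each certified by an
invariant of the cleared sets that a step searching at most two vertices cannot break. A cycle
survives in every subdivision as a nonempty subgraph of minimum degree two, none of whose vertices
can be cleared without searching it together with two of its neighbours. A vertex of degree three
becomes, once every edge is subdivided, a spider (a centre with three legs of length two) in every
further subdivision, and the centre of a spider is never cleared. Conversely, every subdivision of
`G` is searched by `|V(G)| + 2` searchers: one on each branch vertex and two sweeping one
subdivided edge at a time.
-/

section Search

variable {G : SimpleGraph V}

lemma mem_diff_boundary_iff {X : Set V} {w : V} :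
    w ∈ X \ boundary G X ↔ w ∈ X ∧ ∀ w', G.Adj w w' → w' ∈ X := by
  refine ⟨fun ⟨hw, hnb⟩ => ⟨hw, fun w' hadj => ?_⟩,
    fun ⟨hw, hnb⟩ => ⟨hw, fun ⟨_, w', hw', hadj⟩ => hw' (hnb w' hadj)⟩⟩
  by_contra hw'
  exact hnb ⟨hw, w', hw', hadj⟩

lemma diff_boundary_mono {X Y : Set V} (h : X ⊆ Y) : X \ boundary G X ⊆ Y \ boundary G Y := by
  intro w hw
  rw [mem_diff_boundary_iff] at hw ⊢
  exact ⟨h hw.1, fun w' hw' => h (hw.2 w' hw')⟩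

lemma boundary_union_subset (X Y : Set V) :
    boundary G (X ∪ Y) ⊆ boundary G X ∪ boundary G Y := by
  rintro w ⟨hw | hw, w', hw', hadj⟩
  · exact Or.inl ⟨hw, w', fun h => hw' (Or.inl h), hadj⟩
  · exact Or.inr ⟨hw, w', fun h => hw' (Or.inr h), hadj⟩

lemma SuccessfulSearch.mono {k k' : ℕ} (h : SuccessfulSearch G k) (hk : k ≤ k') :
    SuccessfulSearch G k' :=
  let ⟨ℓ, S, hS, hℓ⟩ := h
  ⟨ℓ, S, fun t h₁ h₂ => (hS t h₁ h₂).trans hk, hℓ⟩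

theorem not_successfulSearch_of_invariant {k : ℕ} (P : Set V → Prop) (h₀ : P ∅)
    (hstep : ∀ F S : Set V, P F → S.ncard ≤ k → P ((F ∪ S) \ boundary G (F ∪ S)))
    (huniv : ¬ P Set.univ) : ¬ SuccessfulSearch G k := by
  rintro ⟨ℓ, S, hS, hℓ⟩
  have hP : ∀ t ≤ ℓ, P (FC G S t) := by
    intro t
    induction t with
    | zero => exact fun _ => h₀
    | succ t ih => exact fun ht => hstep _ _ (ih (by omega)) (hS (t + 1) (by omega) ht)
  exact huniv (hℓ ▸ hP ℓ le_rfl)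

-- Only the interior of `X` must be cleared: its boundary is still to be guarded by later searches.
def CanClear (G : SimpleGraph V) (k : ℕ) (X : Set V) : Prop :=
  ∃ (ℓ : ℕ) (S : ℕ → Set V),
    (∀ t, 1 ≤ t → t ≤ ℓ → (S t).ncard ≤ k) ∧ X \ boundary G X ⊆ FC G S ℓ

lemma FC_congr {S S' : ℕ → Set V} {ℓ : ℕ} (h : ∀ t, 1 ≤ t → t ≤ ℓ → S t = S' t) :
    FC G S ℓ = FC G S' ℓ := by
  induction ℓ with
  | zero => rfl
  | succ ℓ ih =>
    simp only [FC, ih fun t h₁ h₂ => h t h₁ (by omega), h (ℓ + 1) (by omega) le_rfl]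

lemma canClear_empty (G : SimpleGraph V) (k : ℕ) : CanClear G k ∅ :=
  ⟨0, fun _ => ∅, fun t h₁ h₂ => by omega, by simp⟩

lemma CanClear.mono {k : ℕ} {X Y : Set V} (h : CanClear G k X) (hYX : Y ⊆ X) : CanClear G k Y :=
  let ⟨ℓ, S, hS, hX⟩ := h
  ⟨ℓ, S, hS, (diff_boundary_mono hYX).trans hX⟩

lemma CanClear.step {k : ℕ} {X X' T : Set V} (hX : CanClear G k X) (hX' : X' ⊆ X ∪ T)
    (hbd : boundary G X ⊆ T) (hT : T.ncard ≤ k) : CanClear G k X' := by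
  obtain ⟨ℓ, S, hS, hXS⟩ := hX
  refine ⟨ℓ + 1, fun t => if t ≤ ℓ then S t else T, fun t h₁ h₂ => ?_, ?_⟩
  · dsimp only
    split_ifs with ht
    exacts [hS t h₁ ht, hT]
  · have hFC : FC G (fun t => if t ≤ ℓ then S t else T) ℓ = FC G S ℓ :=
      FC_congr fun t _ ht => if_pos ht
    simp only [FC, hFC, show ¬ ℓ + 1 ≤ ℓ by omega, if_false]
    refine diff_boundary_mono (hX'.trans (Set.union_subset (fun w hw => ?_)
      Set.subset_union_right))
    by_cases hwb : w ∈ boundary G X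
    exacts [Or.inr (hbd hwb), Or.inl (hXS ⟨hw, hwb⟩)]

lemma CanClear.successfulSearch {k : ℕ} (h : CanClear G k Set.univ) : SuccessfulSearch G k := by
  obtain ⟨ℓ, S, hS, h⟩ := h
  refine ⟨ℓ, S, hS, Set.eq_univ_of_univ_subset ?_⟩
  simpa [boundary] using h

lemma successfulSearch_inspectionNumber (G : SimpleGraph V) :
    SuccessfulSearch G (inspectionNumber G) :=
  Nat.sInf_mem (s := {k | SuccessfulSearch G k})
    ⟨_, ((canClear_empty G _).step (T := Set.univ) (by simp) (by simp [boundary])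
      le_rfl).successfulSearch⟩

end Search

section Obstructions

variable {G : SimpleGraph V}

def HasTwoCore (G : SimpleGraph V) : Prop :=
  ∃ C : Set V, C.Nonempty ∧ ∀ w ∈ C, ∃ a b, a ≠ b ∧ G.Adj w a ∧ G.Adj w b ∧ a ∈ C ∧ b ∈ C

def HasSpider (G : SimpleGraph V) : Prop :=
  ∃ (v : V) (x y : Fin 3 → V), Function.Injective x ∧
    ∀ i, G.Adj v (x i) ∧ G.Adj (x i) (y i) ∧ y i ≠ v

lemma hasTwoCore_of_isCycle {u : V} {c : G.Walk u u} (hc : c.IsCycle) : HasTwoCore G := by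
  classical
  refine ⟨{w | w ∈ c.support}, ⟨u, c.start_mem_support⟩, fun w hw => ?_⟩
  have hc' := Walk.IsCycle.rotate hw hc
  exact ⟨_, _, hc'.snd_ne_penultimate, Walk.adj_snd hc'.not_nil,
    (Walk.adj_penultimate hc'.not_nil).symm,
    (c.mem_support_rotate_iff w hw).mp (Walk.getVert_mem_support _ _),
    (c.mem_support_rotate_iff w hw).mp (Walk.getVert_mem_support _ _)⟩

lemma false_of_three_mem_of_ncard_le_two [Finite V] {S : Set V} (hS : S.ncard ≤ 2) {a b c : V}
    (ha : a ∈ S) (hb : b ∈ S) (hc : c ∈ S) (hab : a ≠ b) (hac : a ≠ c) (hbc : b ≠ c) : False :=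
  ((Set.two_lt_ncard_iff S.toFinite).mpr ⟨a, b, c, ha, hb, hc, hab, hac, hbc⟩).not_ge hS

theorem HasTwoCore.not_successfulSearch_two [Finite V] (hG : HasTwoCore G) :
    ¬ SuccessfulSearch G 2 := by
  obtain ⟨C, ⟨c, hc⟩, hC⟩ := hG
  refine not_successfulSearch_of_invariant (fun F => Disjoint F C) (Set.empty_disjoint C) ?_
    fun h => Set.disjoint_left.mp h (Set.mem_univ c) hc
  intro F S hF hS
  refine Set.disjoint_left.mpr fun w hw hwC => ?_
  rw [mem_diff_boundary_iff] at hw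
  obtain ⟨a, b, hab, hwa, hwb, haC, hbC⟩ := hC w hwC
  have mem_S : ∀ z ∈ C, z ∈ F ∪ S → z ∈ S :=
    fun z hz h => h.resolve_left (Set.disjoint_right.mp hF hz)
  exact false_of_three_mem_of_ncard_le_two hS (mem_S w hwC hw.1) (mem_S a haC (hw.2 a hwa))
    (mem_S b hbC (hw.2 b hwb)) hwa.ne hwb.ne hab

theorem HasSpider.not_successfulSearch_two [Finite V] (hG : HasSpider G) :
    ¬ SuccessfulSearch G 2 := by
  obtain ⟨v, x, y, hx, hleg⟩ := hG
  choose hvx hxy hyv using hleg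
  refine not_successfulSearch_of_invariant
    (fun F => v ∉ F ∧ ∀ i j, i ≠ j → x i ∈ F → x j ∉ F ∧ y j ∉ F)
    ⟨id, fun _ _ _ h => h.elim⟩ ?_ fun h => h.1 trivial
  rintro F S ⟨hvF, hF⟩ hS
  -- Breaking the invariant needs `v` searched together with two vertices of contaminated legs.
  have three := @false_of_three_mem_of_ncard_le_two _ _ S hS
  have leg : ∀ j, x j ∈ (F ∪ S) \ boundary G (F ∪ S) ∨ y j ∈ (F ∪ S) \ boundary G (F ∪ S) →
      x j ∈ F ∪ S ∧ y j ∈ F ∪ S := by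
    rintro j (h | h) <;> rw [mem_diff_boundary_iff] at h
    exacts [⟨h.1, h.2 _ (hxy j)⟩, ⟨h.2 _ (hxy j).symm, h.1⟩]
  constructor
  · intro hv
    rw [mem_diff_boundary_iff] at hv
    have hvS : v ∈ S := hv.1.resolve_left hvF
    have hxFS := fun i => hv.2 _ (hvx i)
    obtain ⟨i, j, hij, hi, hj⟩ : ∃ i j, i ≠ j ∧ x i ∈ S ∧ x j ∈ S := by
      by_cases h0 : x 0 ∈ F
      · exact ⟨1, 2, by decide, (hxFS 1).resolve_left (hF 0 1 (by decide) h0).1,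
          (hxFS 2).resolve_left (hF 0 2 (by decide) h0).1⟩
      by_cases h1 : x 1 ∈ F
      · exact ⟨0, 2, by decide, (hxFS 0).resolve_left h0,
          (hxFS 2).resolve_left (hF 1 2 (by decide) h1).1⟩
      exact ⟨0, 1, by decide, (hxFS 0).resolve_left h0, (hxFS 1).resolve_left h1⟩
    exact three hvS hi hj (hvx i).ne (hvx j).ne (hx.ne hij)
  · intro i j hij hxi
    have hvS : v ∈ S := ((mem_diff_boundary_iff.mp hxi).2 v (hvx i).symm).resolve_left hvF
    rw [← not_or]
    intro hj
    obtain ⟨hxj, hyj⟩ := leg j hj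
    obtain ⟨hxi', hyi'⟩ := leg i (Or.inl hxi)
    rcases hxi' with hxiF | hxiS
    · obtain ⟨hxjF, hyjF⟩ := hF i j hij hxiF
      exact three hvS (hxj.resolve_left hxjF) (hyj.resolve_left hyjF) (hvx j).ne (hyv j).symm
        (hxy j).ne
    · have hyiF : y i ∈ F := hyi'.resolve_right fun hyiS =>
        three hvS hxiS hyiS (hvx i).ne (hyv i).symm (hxy i).ne
      have hxjS : x j ∈ S := hxj.resolve_left fun hxjF => (hF j i hij.symm hxjF).2 hyiF
      exact three hvS hxiS hxjS (hvx i).ne (hvx j).ne (hx.ne hij)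

end Obstructions

lemma exists_adj_adj_of_mem_support_of_isPath {G : SimpleGraph V} {a b w : V} {p : G.Walk a b}
    (hp : p.IsPath) (hw : w ∈ p.support) (hwa : w ≠ a) (hwb : w ≠ b) :
    ∃ s t, s ≠ t ∧ G.Adj w s ∧ G.Adj w t ∧ s ∈ p.support ∧ t ∈ p.support := by
  obtain ⟨n, rfl, hn⟩ := Walk.mem_support_iff_exists_getVert.mp hw
  have hn0 : n ≠ 0 := by rintro rfl; exact hwa p.getVert_zero
  have hnl : n ≠ p.length := by rintro rfl; exact hwb p.getVert_length
  refine ⟨p.getVert (n - 1), p.getVert (n + 1), fun h => ?_, ?_, p.adj_getVert_succ (by omega),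
    p.getVert_mem_support _, p.getVert_mem_support _⟩
  · have := hp.getVert_injOn (by simp only [Set.mem_ofPred_eq]; omega)
      (by simp only [Set.mem_ofPred_eq]; omega) h
    omega
  · simpa [Nat.sub_add_cancel (Nat.pos_of_ne_zero hn0)] using
      (p.adj_getVert_succ (i := n - 1) (by omega)).symm

namespace SubdivisionData

variable {G : SimpleGraph V} {K : SimpleGraph W} (D : SubdivisionData G K)

lemma walk_not_nil {u v : V} (h : G.Adj u v) : ¬ (D.walk h).Nil :=
  fun hnil => h.ne (D.inj hnil.eq)

lemma snd_walk_ne {u a b : V} (h₁ : G.Adj u a) (h₂ : G.Adj u b) (hab : a ≠ b) :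
    (D.walk h₁).snd ≠ (D.walk h₂).snd := by
  intro heq
  have hw₁ := (D.walk h₁).getVert_mem_support 1
  have hw₂ : (D.walk h₁).snd ∈ (D.walk h₂).support :=
    heq ▸ (D.walk h₂).getVert_mem_support 1
  have hf := D.disj h₁ h₂ (fun e => hab (Sym2.congr_right.mp e)) _ hw₁ hw₂
  have hne₁ := (Walk.adj_snd (D.walk_not_nil h₁)).ne'
  have hne₂ : (D.walk h₁).snd ≠ D.f u := heq ▸ (Walk.adj_snd (D.walk_not_nil h₂)).ne'
  exact hab (D.inj (((D.branch h₁ _ hw₁ hf).resolve_left hne₁).symm.trans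
    ((D.branch h₂ _ hw₂ hf).resolve_left hne₂)))

lemma exists_adj_snd_walk_ne {v x y : V} (hvx : G.Adj v x) (hxy : G.Adj x y) (hyv : y ≠ v) :
    ∃ y', K.Adj (D.walk hvx).snd y' ∧ y' ≠ D.f v := by
  have hlen : 1 ≤ (D.walk hvx).length :=
    Nat.one_le_iff_ne_zero.mpr fun h => D.walk_not_nil hvx (Walk.length_eq_zero_iff.mp h)
  rcases hlen.eq_or_lt with hlen | hlen
  · -- The walk of `vx` is a single edge; continue along the walk of `xy`.
    have hsnd : (D.walk hvx).snd = D.f x := by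
      rw [Walk.snd, hlen, Walk.getVert_length]
    refine ⟨(D.walk hxy).snd, by rw [hsnd]; exact Walk.adj_snd (D.walk_not_nil hxy),
      fun h => ?_⟩
    have hmem : D.f v ∈ (D.walk hxy).support := h ▸ (D.walk hxy).getVert_mem_support 1
    rcases D.branch hxy _ hmem ⟨v, rfl⟩ with h' | h'
    exacts [hvx.ne (D.inj h'), hyv (D.inj h').symm]
  · refine ⟨(D.walk hvx).getVert 2, (D.walk hvx).adj_getVert_succ hlen, fun h => ?_⟩
    have := ((D.isPath hvx).getVert_eq_start_iff hlen).mp h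
    omega

lemma mem_edges_walk_of_adj {u v : V} (h : G.Adj u v) {w w' : W}
    (hw : w ∈ (D.walk h).support) (hwf : w ∉ Set.range D.f) (hadj : K.Adj w w') :
    s(w, w') ∈ (D.walk h).edges := by
  obtain ⟨a, b, hab, he⟩ := D.cover_edge s(w, w') hadj
  have hsame : s(a, b) = s(u, v) := by
    by_contra hne
    exact hwf (D.disj hab h hne w (Walk.fst_mem_support_of_mem_edges _ he) hw)
  rcases Sym2.eq_iff.mp hsame with ⟨rfl, rfl⟩ | ⟨rfl, rfl⟩
  · exact he
  · rwa [show D.walk hab = (D.walk h).reverse from D.symm h, Walk.edges_reverse,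
      List.mem_reverse] at he

lemma eq_getVert_of_adj {u v : V} (h : G.Adj u v) {r : ℕ} {w' : W}
    (hr : (D.walk h).getVert r ∉ Set.range D.f) (hadj : K.Adj ((D.walk h).getVert r) w') :
    w' = (D.walk h).getVert (r - 1) ∨ w' = (D.walk h).getVert (r + 1) := by
  have hrl : r ≤ (D.walk h).length := by
    by_contra hlt
    exact hr ⟨v, by rw [(D.walk h).getVert_of_length_le (by omega)]⟩
  obtain ⟨i, hi, he⟩ := (Walk.mk_mem_edges_iff_exists _).mp
    (D.mem_edges_walk_of_adj h ((D.walk h).getVert_mem_support r) hr hadj)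
  have inj := (D.isPath h).getVert_injOn
  rcases Sym2.eq_iff.mp he with ⟨h₁, h₂⟩ | ⟨h₁, h₂⟩
  · obtain rfl : i = r := inj (by simp only [Set.mem_ofPred_eq]; omega) hrl h₁
    exact Or.inr h₂.symm
  · obtain rfl : i + 1 = r := inj (by simp only [Set.mem_ofPred_eq]; omega) hrl h₂
    exact Or.inl (by simpa using h₁.symm)

lemma adj_mem_support_walk {u v : V} (h : G.Adj u v) {w w' : W}
    (hw : w ∈ (D.walk h).support) (hwf : w ∉ Set.range D.f) (hadj : K.Adj w w') :
    w' ∈ (D.walk h).support :=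
  Walk.snd_mem_support_of_mem_edges _ (D.mem_edges_walk_of_adj h hw hwf hadj)

lemma boundary_getVert_le_subset {u v : V} (h : G.Adj u v) (i : ℕ) :
    boundary K {w | ∃ j ≤ i, (D.walk h).getVert j = w} ⊆
      Set.range D.f ∪ {(D.walk h).getVert i} := by
  rintro _ ⟨⟨j, hj, rfl⟩, w', hw', hadj⟩
  by_contra hout
  simp only [Set.mem_union, Set.mem_singleton_iff, not_or] at hout
  have hji : j < i := lt_of_le_of_ne hj fun e => hout.2 (e ▸ rfl)
  rcases D.eq_getVert_of_adj h hout.1 hadj with rfl | rfl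
  exacts [hw' ⟨j - 1, by omega, rfl⟩, hw' ⟨j + 1, by omega, rfl⟩]

lemma canClear_union_support_walk {k : ℕ} (hk : (Set.range D.f).ncard + 2 ≤ k) {u v : V}
    (h : G.Adj u v) {X : Set W} (hX : CanClear K k X) (hfX : Set.range D.f ⊆ X)
    (hbd : boundary K X ⊆ Set.range D.f) :
    CanClear K k (X ∪ {w | w ∈ (D.walk h).support}) := by
  set p := D.walk h
  have sweep : ∀ i, CanClear K k (X ∪ {w | ∃ j ≤ i, p.getVert j = w}) := by
    intro i
    induction i with
    | zero =>
      refine hX.mono (Set.union_subset le_rfl ?_)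
      rintro _ ⟨j, hj, rfl⟩
      obtain rfl : j = 0 := by omega
      exact hfX ⟨u, p.getVert_zero.symm⟩
    | succ i ih =>
      refine ih.step (T := Set.range D.f ∪ {p.getVert i, p.getVert (i + 1)}) ?_ ?_ ?_
      · rintro w (hw | ⟨j, hj, rfl⟩)
        · exact Or.inl (Or.inl hw)
        rcases hj.lt_or_eq with hj | rfl
        exacts [Or.inl (Or.inr ⟨j, by omega, rfl⟩), Or.inr (Or.inr (Or.inr rfl))]
      · refine (boundary_union_subset _ _).trans (Set.union_subset
          (hbd.trans Set.subset_union_left) ((D.boundary_getVert_le_subset h i).trans ?_))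
        exact Set.union_subset_union_right _
          (Set.singleton_subset_iff.mpr (Set.mem_insert _ _))
      · calc (Set.range D.f ∪ {p.getVert i, p.getVert (i + 1)}).ncard
            ≤ (Set.range D.f).ncard + ({p.getVert i, p.getVert (i + 1)} : Set W).ncard :=
              Set.ncard_union_le _ _
          _ ≤ k := by
              have := Set.ncard_insert_le (p.getVert i) {p.getVert (i + 1)}
              rw [Set.ncard_singleton] at this
              omega
  refine (sweep p.length).mono (Set.union_subset_union_right X fun w hw => ?_)
  obtain ⟨j, hj, hjl⟩ := Walk.mem_support_iff_exists_getVert.mp hw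
  exact ⟨j, hjl, hj⟩

theorem successfulSearch [Finite V] (D : SubdivisionData G K) :
    SuccessfulSearch K (Nat.card V + 2) := by
  classical
  have := Fintype.ofFinite V
  have hk : (Set.range D.f).ncard + 2 ≤ Nat.card V + 2 := by
    rw [Set.ncard_range_of_injective D.inj]
  let region : Finset (V × V) → Set W := fun P =>
    Set.range D.f ∪ {w | ∃ uv ∈ P, ∃ h : G.Adj uv.1 uv.2, w ∈ (D.walk h).support}
  have hbd : ∀ P, boundary K (region P) ⊆ Set.range D.f := by
    rintro P w ⟨hw, w', hw', hadj⟩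
    by_contra hwf
    rcases hw with hw | ⟨uv, huv, h, hw⟩
    exacts [hwf hw, hw' (Or.inr ⟨uv, huv, h, D.adj_mem_support_walk h hw hwf hadj⟩)]
  have hclear : ∀ P, CanClear K (Nat.card V + 2) (region P) := by
    intro P
    induction P using Finset.induction_on with
    | empty =>
      exact (canClear_empty K _).step (T := Set.range D.f) (by simp [region])
        (by simp [boundary]) (by omega)
    | insert uv P _ ih =>
      by_cases h : G.Adj uv.1 uv.2
      · refine (D.canClear_union_support_walk hk h ih Set.subset_union_left (hbd P)).mono ?_
        rintro w (hw | ⟨uv', huv', h', hw⟩)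
        · exact Or.inl (Or.inl hw)
        rcases Finset.mem_insert.mp huv' with rfl | huv'
        exacts [Or.inr hw, Or.inl (Or.inr ⟨uv', huv', h', hw⟩)]
      · refine ih.mono ?_
        rintro w (hw | ⟨uv', huv', h', hw⟩)
        · exact Or.inl hw
        rcases Finset.mem_insert.mp huv' with rfl | huv'
        exacts [absurd h' h, Or.inr ⟨uv', huv', h', hw⟩]
  have huniv : region Finset.univ = Set.univ := Set.eq_univ_of_forall fun w =>
    (D.cover_vert w).imp_right fun ⟨u, v, h, hw⟩ => ⟨(u, v), Finset.mem_univ _, h, hw⟩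
  exact (huniv ▸ hclear Finset.univ).successfulSearch

theorem finite [Finite V] (D : SubdivisionData G K) : Finite W := by
  have hcover : Set.range D.f ∪ ⋃ e : {uv : V × V // G.Adj uv.1 uv.2},
      {w | w ∈ (D.walk e.2).support} = Set.univ :=
    Set.eq_univ_of_forall fun w => (D.cover_vert w).imp_right fun ⟨u, v, h, hw⟩ =>
      Set.mem_iUnion.mpr ⟨⟨(u, v), h⟩, hw⟩
  exact Set.finite_univ_iff.mp (hcover ▸ (Set.finite_range D.f).union
    (Set.finite_iUnion fun e => (D.walk e.2).support.finite_toSet))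

def refl (H : SimpleGraph W) : SubdivisionData H H where
  f := id
  inj := Function.injective_id
  walk h := .cons h .nil
  isPath h := by simp [h.ne]
  symm _ := rfl
  disj _ _ _ w _ _ := ⟨w, rfl⟩
  branch _ _ hw _ := by simpa using hw
  cover_vert w := Or.inl ⟨w, rfl⟩
  cover_edge e he := by
    induction e using Sym2.ind with
    | h u v => exact ⟨u, v, he, List.mem_cons_self⟩

end SubdivisionData

theorem HasTwoCore.of_subdivisionData {G : SimpleGraph V} {K : SimpleGraph W}
    (D : SubdivisionData G K) (hG : HasTwoCore G) : HasTwoCore K := by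
  obtain ⟨C, ⟨c, hc⟩, hC⟩ := hG
  let C' : Set W := {w | ∃ a b, ∃ h : G.Adj a b, a ∈ C ∧ b ∈ C ∧ w ∈ (D.walk h).support}
  have hbranch : ∀ a ∈ C,
      ∃ s t, s ≠ t ∧ K.Adj (D.f a) s ∧ K.Adj (D.f a) t ∧ s ∈ C' ∧ t ∈ C' := by
    intro a ha
    obtain ⟨z₁, z₂, hz, h₁, h₂, hz₁, hz₂⟩ := hC a ha
    exact ⟨_, _, D.snd_walk_ne h₁ h₂ hz, Walk.adj_snd (D.walk_not_nil h₁),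
      Walk.adj_snd (D.walk_not_nil h₂), ⟨a, z₁, h₁, ha, hz₁, Walk.getVert_mem_support _ _⟩,
      ⟨a, z₂, h₂, ha, hz₂, Walk.getVert_mem_support _ _⟩⟩
  obtain ⟨z, -, -, hz, -, hzC, -⟩ := hC c hc
  refine ⟨C', ⟨D.f c, c, z, hz, hc, hzC, Walk.start_mem_support _⟩, ?_⟩
  rintro w ⟨a, b, h, ha, hb, hw⟩
  by_cases hwf : w ∈ Set.range D.f
  · rcases D.branch h w hw hwf with rfl | rfl
    exacts [hbranch a ha, hbranch b hb]
  · obtain ⟨s, t, hst, hs, ht, hsp, htp⟩ := exists_adj_adj_of_mem_support_of_isPath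
      (D.isPath h) hw (fun e => hwf ⟨a, e.symm⟩) (fun e => hwf ⟨b, e.symm⟩)
    exact ⟨s, t, hst, hs, ht, ⟨a, b, h, ha, hb, hsp⟩, ⟨a, b, h, ha, hb, htp⟩⟩

theorem HasSpider.of_subdivisionData {G : SimpleGraph V} {K : SimpleGraph W}
    (D : SubdivisionData G K) (hG : HasSpider G) : HasSpider K := by
  obtain ⟨v, x, y, hx, hleg⟩ := hG
  choose hvx hxy hyv using hleg
  choose y' hxy' hyv' using fun i => D.exists_adj_snd_walk_ne (hvx i) (hxy i) (hyv i)
  exact ⟨D.f v, fun i => (D.walk (hvx i)).snd, y',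
    fun i j hij => by_contra fun hne => D.snd_walk_ne (hvx i) (hvx j) (hx.ne hne) hij,
    fun i => ⟨Walk.adj_snd (D.walk_not_nil _), hxy' i, hyv' i⟩⟩

section SubdivideEdges

variable (G : SimpleGraph V)

/-- Every edge subdivided once: the vertex `.inr e` is the midpoint of the edge `e`. -/
def subdivideEdges : SimpleGraph (V ⊕ G.edgeSet) where
  Adj
    | .inl u, .inr e => u ∈ (e : Sym2 V)
    | .inr e, .inl u => u ∈ (e : Sym2 V)
    | _, _ => False
  symm := ⟨by rintro (u | e) (v | f) h <;> exact h⟩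
  loopless := ⟨by rintro (u | e) h <;> exact h⟩

variable {G}

lemma subdivideEdges_adj_inl_inr {u : V} {e : G.edgeSet} :
    (subdivideEdges G).Adj (.inl u) (.inr e) ↔ u ∈ (e : Sym2 V) := Iff.rfl

lemma subdivideEdges_adj_inr_inl {u : V} {e : G.edgeSet} :
    (subdivideEdges G).Adj (.inr e) (.inl u) ↔ u ∈ (e : Sym2 V) := Iff.rfl

def subdivideEdgesWalk {u v : V} (h : G.Adj u v) :
    (subdivideEdges G).Walk (.inl u) (.inl v) :=
  .cons (subdivideEdges_adj_inl_inr.mpr (Sym2.mem_mk_left u v) :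
      (subdivideEdges G).Adj (.inl u) (.inr ⟨s(u, v), h⟩))
    (.cons (subdivideEdges_adj_inr_inl.mpr (Sym2.mem_mk_right u v)) .nil)

variable (G)

def subdivideEdgesData : SubdivisionData G (subdivideEdges G) where
  f := .inl
  inj := Sum.inl_injective
  walk := subdivideEdgesWalk
  isPath h := by simp [subdivideEdgesWalk, h.ne]
  symm h := Walk.ext_support (by simp [subdivideEdgesWalk, Sym2.eq_swap])
  disj := by
    rintro u v x y h₁ h₂ hne (a | e) hw₁ hw₂
    · exact ⟨a, rfl⟩
    · simp [subdivideEdgesWalk] at hw₁ hw₂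
      exact absurd (congrArg Subtype.val (hw₁.symm.trans hw₂)) hne
  branch := by
    rintro u v h _ hw ⟨a, rfl⟩
    simpa [subdivideEdgesWalk] using hw
  cover_vert := by
    rintro (a | ⟨e, he⟩)
    · exact Or.inl ⟨a, rfl⟩
    · induction e using Sym2.ind with
      | h a b => exact Or.inr ⟨a, b, he, by simp [subdivideEdgesWalk]⟩
  cover_edge e he := by
    induction e using Sym2.ind with
    | h a b =>
      have incidence : ∀ u (e : G.edgeSet), u ∈ (e : Sym2 V) →
          ∃ x y, ∃ h : G.Adj x y, s(.inl u, .inr e) ∈ (subdivideEdgesWalk h).edges := by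
        rintro u ⟨e, he'⟩ hu
        obtain ⟨w, rfl⟩ := Sym2.mem_iff_exists.mp hu
        exact ⟨u, w, he', List.mem_cons_self⟩
      rcases a with u | e <;> rcases b with w | f
      · exact he.elim
      · exact incidence u f he
      · rw [Sym2.eq_swap]
        exact incidence w e he
      · exact he.elim

theorem hasSpider_subdivideEdges {u a b c : V} (ha : G.Adj u a) (hb : G.Adj u b) (hc : G.Adj u c)
    (hab : a ≠ b) (hac : a ≠ c) (hbc : b ≠ c) : HasSpider (subdivideEdges G) := by
  refine ⟨.inl u, ![.inr ⟨s(u, a), ha⟩, .inr ⟨s(u, b), hb⟩, .inr ⟨s(u, c), hc⟩],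
    ![.inl a, .inl b, .inl c], ?_, ?_⟩
  · intro i j hij
    fin_cases i <;> fin_cases j <;>
      simp_all [Subtype.ext_iff, ha.ne, Ne.symm hab, Ne.symm hac, Ne.symm hbc]
  · intro i
    fin_cases i <;>
      simp [subdivideEdges_adj_inl_inr, subdivideEdges_adj_inr_inl, ha.ne', hb.ne', hc.ne']

end SubdivideEdges

theorem exists_successfulSearch_of_topInspectionNumber_le [Finite V] {G : SimpleGraph V} {k : ℕ}
    (hG : topInspectionNumber G ≤ k) {W : Type} {H : SimpleGraph W} (D : SubdivisionData G H) :
    ∃ (W' : Type) (H' : SimpleGraph W'), Finite W' ∧ Nonempty (SubdivisionData H H') ∧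
      SuccessfulSearch H' k := by
  -- `sInf ∅ = 0`, so the bound `Nat.card V + 2` on subdivisions is what gives `hG` content.
  have hmem : topInspectionNumber G ∈ _ := Nat.sInf_mem ⟨Nat.card V + 2, fun W' H ⟨D⟩ =>
    ⟨W', H, ⟨.refl H⟩, Nat.sInf_le D.successfulSearch⟩⟩
  obtain ⟨W', H', ⟨D'⟩, hH'⟩ := hmem W H ⟨D⟩
  have := D.finite
  exact ⟨W', H', D'.finite, ⟨D'⟩, (successfulSearch_inspectionNumber H').mono (hH'.trans hG)⟩

theorem isPath_of_topInspectionNumber_le_two_general {V : Type} [Fintype V] (G : SimpleGraph V)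
    (h : topInspectionNumber G ≤ 2) :
    G.IsAcyclic ∧ ∀ v : V, (G.neighborSet v).ncard ≤ 2 := by
  refine ⟨fun u c hc => ?_, fun u => ?_⟩
  · obtain ⟨W, H, _, ⟨D⟩, hH⟩ := exists_successfulSearch_of_topInspectionNumber_le h (.refl G)
    exact ((hasTwoCore_of_isCycle hc).of_subdivisionData D).not_successfulSearch_two hH
  · by_contra! hu
    obtain ⟨a, b, c, ha, hb, hc, hab, hac, hbc⟩ := (Set.two_lt_ncard_iff (Set.toFinite _)).mp hu
    obtain ⟨W, H, _, ⟨D⟩, hH⟩ :=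
      exists_successfulSearch_of_topInspectionNumber_le h (subdivideEdgesData G)
    exact ((hasSpider_subdivideEdges G ha hb hc hab hac hbc).of_subdivisionData
      D).not_successfulSearch_two hH

/-- A connected finite simple graph with `in_t(G) ≤ 2` is a path, i.e. it is
acyclic and has maximum degree at most `2`. -/
theorem isPath_of_topInspectionNumber_le_two {V : Type} [Fintype V] (G : SimpleGraph V)
    (hconn : G.Connected) (h : topInspectionNumber G ≤ 2) :
    G.IsAcyclic ∧ ∀ v : V, (G.neighborSet v).ncard ≤ 2 :=
  isPath_of_topInspectionNumber_le_two_general G h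

end Inspection
end
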